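/- Let S be a commutative ring and δ : S → S a derivation, extended entrywise to matrices over S and to the Laurent polynomial ring S[ε, ε⁻¹] by δ(ε) = 0. Let A(ε) be a filtration-compatible connection matrix with block sizes d₁, d₂, d₃, and suppose the matrices R⁰₁₁, R⁰₂₂, R⁰₃₃ (invertible), R⁻¹₂₁, R⁻²₃₁, R⁻¹₃₂, R⁰₂₁, R⁻¹₃₁, R⁰₃₂ over S satisfy the six equations of the first rotation step and the three equations of the second rotation step (as listed in the two previous results). Suppose in addition that a d₃×d₁ matrix R⁰₃₁ over S satisfies: δR⁰₃₁ = (R⁰₃₃)⁻¹ [ A⁰₃₁ R⁰₁₁ + A¹₃₂ R⁻¹₂₁ + A⁰₃₂ R⁰₂₂ R⁰₂₁ + A¹₃₃ R⁻¹₃₂ R⁰₂₁ + A¹₃₃ R⁰₃₃ R⁻¹₃₁ − R⁻¹₃₂ (R⁰₂₂)⁻¹ ( A¹₂₁ R⁰₁₁ + A¹₂₂ R⁰₂₂ R⁰₂₁ ) ] − R⁻¹₃₁ (R⁰₁₁)⁻¹ ( A¹₁₁ R⁰₁₁ + A¹₁₂ R⁰₂₂ R⁰₂₁ ). Let R(ε)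 = [[R⁰₁₁, 0, 0], [ε⁻¹ R⁻¹₂₁, R⁰₂₂, 0], [ε⁻² R⁻²₃₁, ε⁻¹ R⁻¹₃₂, R⁰₃₃]], R′(ε) = [[1, 0, 0], [R⁰₂₁, 1, 0], [ε⁻¹ R⁻¹₃₁, R⁰₃₂, 1]], and R″(ε) = [[1, 0, 0], [0, 1, 0], [R⁰₃₁, 0, 1]]. Then the gauge transform of A(ε) by the product R(ε) R′(ε) R″(ε) is ε-factorised: it equals ε · B for a matrix B with entries in S (independent of ε). -/

import Mathlib

open LaurentPolynomial

/-- The coefficient of `ε^k` in a Laurent polynomial in `ε`. -/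
noncomputable def lcoeff {S : Type*} [Semiring S] (p : LaurentPolynomial S) (k : ℤ) : S :=
  p.coeff k

/-- The entrywise extension of a derivation `δ : S → S` to the Laurent polynomial ring
`S[ε, ε⁻¹]`, determined by `δ(ε) = 0`: it acts on each coefficient. -/
noncomputable def lder {S : Type*} [Semiring S] (δ : S → S) (h0 : δ 0 = 0)
    (p : LaurentPolynomial S) : LaurentPolynomial S :=
  AddMonoidAlgebra.ofCoeff (Finsupp.mapRange δ h0 p.coeff)

/-- The matrix `ε^k M` over the Laurent polynomial ring. -/
noncomputable def lmat {S : Type*} [CommSemiring S] {m n : Type*} (k : ℤ)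
    (M : Matrix m n S) : Matrix m n (LaurentPolynomial S) :=
  M.map fun a => T k * C a

/-- A 3×3 block matrix from its nine blocks. -/
def blk3 {S : Type*} {d₁ d₂ d₃ : ℕ}
    (M11 : Matrix (Fin d₁) (Fin d₁) S) (M12 : Matrix (Fin d₁) (Fin d₂) S)
    (M13 : Matrix (Fin d₁) (Fin d₃) S)
    (M21 : Matrix (Fin d₂) (Fin d₁) S) (M22 : Matrix (Fin d₂) (Fin d₂) S)
    (M23 : Matrix (Fin d₂) (Fin d₃) S)
    (M31 : Matrix (Fin d₃) (Fin d₁) S) (M32 : Matrix (Fin d₃) (Fin d₂) S)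
    (M33 : Matrix (Fin d₃) (Fin d₃) S) :
    Matrix (Fin d₁ ⊕ (Fin d₂ ⊕ Fin d₃)) (Fin d₁ ⊕ (Fin d₂ ⊕ Fin d₃)) S :=
  Matrix.of fun i j =>
    match i, j with
    | .inl a, .inl b => M11 a b
    | .inl a, .inr (.inl b) => M12 a b
    | .inl a, .inr (.inr b) => M13 a b
    | .inr (.inl a), .inl b => M21 a b
    | .inr (.inl a), .inr (.inl b) => M22 a b
    | .inr (.inl a), .inr (.inr b) => M23 a b
    | .inr (.inr a), .inl b => M31 a b
    | .inr (.inr a), .inr (.inl b) => M32 a b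
    | .inr (.inr a), .inr (.inr b) => M33 a b

/-- The filtration-compatible connection matrix
`A(ε) = [[A⁰₁₁+εA¹₁₁, εA¹₁₂, 0],
[ε⁻¹A⁻¹₂₁+A⁰₂₁+εA¹₂₁, A⁰₂₂+εA¹₂₂, εA¹₂₃],
[ε⁻²A⁻²₃₁+ε⁻¹A⁻¹₃₁+A⁰₃₁+εA¹₃₁, ε⁻¹A⁻¹₃₂+A⁰₃₂+εA¹₃₂, A⁰₃₃+εA¹₃₃]]`. -/
noncomputable def connMat {S : Type*} [CommRing S] {d₁ d₂ d₃ : ℕ}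
    (A011 A111 : Matrix (Fin d₁) (Fin d₁) S) (A112 : Matrix (Fin d₁) (Fin d₂) S)
    (Am121 A021 A121 : Matrix (Fin d₂) (Fin d₁) S)
    (A022 A122 : Matrix (Fin d₂) (Fin d₂) S) (A123 : Matrix (Fin d₂) (Fin d₃) S)
    (Am231 Am131 A031 A131 : Matrix (Fin d₃) (Fin d₁) S)
    (Am132 A032 A132 : Matrix (Fin d₃) (Fin d₂) S)
    (A033 A133 : Matrix (Fin d₃) (Fin d₃) S) :
    Matrix (Fin d₁ ⊕ (Fin d₂ ⊕ Fin d₃)) (Fin d₁ ⊕ (Fin d₂ ⊕ Fin d₃))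
      (LaurentPolynomial S) :=
  blk3 (lmat 0 A011 + lmat 1 A111) (lmat 1 A112) 0
    (lmat (-1) Am121 + lmat 0 A021 + lmat 1 A121) (lmat 0 A022 + lmat 1 A122) (lmat 1 A123)
    (lmat (-2) Am231 + lmat (-1) Am131 + lmat 0 A031 + lmat 1 A131)
    (lmat (-1) Am132 + lmat 0 A032 + lmat 1 A132) (lmat 0 A033 + lmat 1 A133)

/-- The gauge transform `Ã = R⁻¹ A R - R⁻¹ δR`. -/
noncomputable def gaugeTransform {S : Type*} [CommRing S] {ι : Type*} [Fintype ι]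
    [DecidableEq ι] (δ : S → S) (h0 : δ 0 = 0)
    (A R : Matrix ι ι (LaurentPolynomial S)) : Matrix ι ι (LaurentPolynomial S) :=
  R⁻¹ * A * R - R⁻¹ * R.map (lder δ h0)


section RotationAux

open LaurentPolynomial

variable {S : Type*} [CommRing S]

theorem lder_add {δ : S → S} {h0 : δ 0 = 0} (hadd : ∀ a b, δ (a + b) = δ a + δ b)
    (p q : LaurentPolynomial S) :
    lder δ h0 (p + q) = lder δ h0 p + lder δ h0 q := by
  unfold lder
  show AddMonoidAlgebra.ofCoeff (Finsupp.mapRange δ h0 (p.coeff + q.coeff)) = _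
  rw [Finsupp.mapRange_add hadd]
  rfl

variable {m n p : Type*}

theorem lmat_add (k : ℤ) (M N : Matrix m n S) :
    lmat k (M + N) = lmat k M + lmat k N := by
  apply Matrix.ext; intro i j
  simp only [lmat, Matrix.map_apply, Matrix.add_apply, map_add]; ring

theorem lmat_sub (k : ℤ) (M N : Matrix m n S) :
    lmat k (M - N) = lmat k M - lmat k N := by
  apply Matrix.ext; intro i j
  simp only [lmat, Matrix.map_apply, Matrix.sub_apply, map_sub]; ring

theorem lmat_zero (k : ℤ) : lmat k (0 : Matrix m n S) = 0 := by
  apply Matrix.ext; intro i j; simp [lmat]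

theorem lmat_neg (k : ℤ) (M : Matrix m n S) : lmat k (-M) = -lmat k M := by
  apply Matrix.ext; intro i j; simp [lmat]

theorem lmat_one [DecidableEq n] : lmat 0 (1 : Matrix n n S) = 1 := by
  apply Matrix.ext; intro i j
  by_cases h : i = j <;> simp [lmat, Matrix.one_apply, h, T_zero]

theorem lmat_mul [Fintype n] (k l : ℤ) (M : Matrix m n S) (N : Matrix n p S) :
    lmat k M * lmat l N = lmat (k + l) (M * N) := by
  apply Matrix.ext; intro i j
  simp only [lmat, Matrix.map_apply, Matrix.mul_apply, map_sum, Finset.mul_sum]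
  congr 1; funext x
  rw [T_add, map_mul]
  ring

theorem mapl_add {δ : S → S} {h0 : δ 0 = 0} (hadd : ∀ a b, δ (a + b) = δ a + δ b)
    (M N : Matrix m n (LaurentPolynomial S)) :
    (M + N).map (lder δ h0) = M.map (lder δ h0) + N.map (lder δ h0) := by
  apply Matrix.ext; intro i j
  simp [Matrix.map_apply, lder_add hadd]

theorem mapl_zero {δ : S → S} {h0 : δ 0 = 0} :
    (0 : Matrix m n (LaurentPolynomial S)).map (lder δ h0) = 0 := by
  apply Matrix.ext; intro i j
  simp only [Matrix.map_apply, Matrix.zero_apply]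
  unfold lder
  simp

theorem lmat_lder {δ : S → S} {h0 : δ 0 = 0} (k : ℤ) (M : Matrix m n S) :
    (lmat k M).map (lder δ h0) = lmat k (M.map δ) := by
  apply Matrix.ext; intro i j
  simp only [lmat, Matrix.map_apply]
  have h : (T k * C (M i j) : LaurentPolynomial S) = (AddMonoidAlgebra.single k (M i j) : LaurentPolynomial S) := by
    rw [single_eq_C_mul_T, mul_comm]
  have h2 : (T k * C (δ (M i j)) : LaurentPolynomial S) = (AddMonoidAlgebra.single k (δ (M i j)) : LaurentPolynomial S) := by
    rw [single_eq_C_mul_T, mul_comm]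
  rw [h, h2]
  unfold lder
  show AddMonoidAlgebra.ofCoeff (Finsupp.mapRange δ h0 (Finsupp.single k (M i j))) = AddMonoidAlgebra.ofCoeff (Finsupp.single k (δ (M i j)))
  rw [Finsupp.mapRange_single]

theorem mapd_add {δ : S → S} (hadd : ∀ a b, δ (a + b) = δ a + δ b)
    (M N : Matrix m n S) : (M + N).map δ = M.map δ + N.map δ := by
  apply Matrix.ext; intro i j
  simp [Matrix.map_apply, hadd]

theorem mapd_mul {δ : S → S} (hadd : ∀ a b, δ (a + b) = δ a + δ b)
    (hmul : ∀ a b, δ (a * b) = δ a * b + a * δ b) [Fintype n]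
    (M : Matrix m n S) (N : Matrix n p S) :
    (M * N).map δ = M.map δ * N + M * N.map δ := by
  apply Matrix.ext; intro i j
  simp only [Matrix.map_apply, Matrix.mul_apply, Matrix.add_apply]
  have h := map_sum (AddMonoidHom.mk' δ hadd) (fun x => M i x * N x j) Finset.univ
  simp only [AddMonoidHom.mk'_apply] at h
  rw [h]
  simp only [hmul]
  rw [Finset.sum_add_distrib]

set_option linter.unusedSectionVars false in
theorem blk3_map {d₁ d₂ d₃ : ℕ} {R : Type*} (f : S → R)
    (M11 : Matrix (Fin d₁) (Fin d₁) S) (M12 : Matrix (Fin d₁) (Fin d₂) S)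
    (M13 : Matrix (Fin d₁) (Fin d₃) S)
    (M21 : Matrix (Fin d₂) (Fin d₁) S) (M22 : Matrix (Fin d₂) (Fin d₂) S)
    (M23 : Matrix (Fin d₂) (Fin d₃) S)
    (M31 : Matrix (Fin d₃) (Fin d₁) S) (M32 : Matrix (Fin d₃) (Fin d₂) S)
    (M33 : Matrix (Fin d₃) (Fin d₃) S) :
    (blk3 M11 M12 M13 M21 M22 M23 M31 M32 M33).map f
      = blk3 (M11.map f) (M12.map f) (M13.map f) (M21.map f) (M22.map f) (M23.map f)
        (M31.map f) (M32.map f) (M33.map f) := by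
  apply Matrix.ext
  rintro (i | i | i) (j | j | j) <;> simp [blk3]

set_option linter.unusedSectionVars false in
theorem lmat_blk3 {d₁ d₂ d₃ : ℕ} (k : ℤ)
    (M11 : Matrix (Fin d₁) (Fin d₁) S) (M12 : Matrix (Fin d₁) (Fin d₂) S)
    (M13 : Matrix (Fin d₁) (Fin d₃) S)
    (M21 : Matrix (Fin d₂) (Fin d₁) S) (M22 : Matrix (Fin d₂) (Fin d₂) S)
    (M23 : Matrix (Fin d₂) (Fin d₃) S)
    (M31 : Matrix (Fin d₃) (Fin d₁) S) (M32 : Matrix (Fin d₃) (Fin d₂) S)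
    (M33 : Matrix (Fin d₃) (Fin d₃) S) :
    lmat k (blk3 M11 M12 M13 M21 M22 M23 M31 M32 M33)
      = blk3 (lmat k M11) (lmat k M12) (lmat k M13) (lmat k M21) (lmat k M22) (lmat k M23)
        (lmat k M31) (lmat k M32) (lmat k M33) := by
  apply Matrix.ext
  rintro (i | i | i) (j | j | j) <;> simp [blk3, lmat]

set_option linter.unusedSectionVars false in
theorem blk3_one {d₁ d₂ d₃ : ℕ} : (1 : Matrix (Fin d₁ ⊕ (Fin d₂ ⊕ Fin d₃)) _ S)
    = blk3 1 0 0 0 1 0 0 0 1 := by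
  apply Matrix.ext
  rintro (i | i | i) (j | j | j) <;>
    simp [blk3, Matrix.one_apply, Sum.inl.injEq, Sum.inr.injEq]

theorem blk3_mul {d₁ d₂ d₃ : ℕ}
    (M11 : Matrix (Fin d₁) (Fin d₁) S) (M12 : Matrix (Fin d₁) (Fin d₂) S)
    (M13 : Matrix (Fin d₁) (Fin d₃) S)
    (M21 : Matrix (Fin d₂) (Fin d₁) S) (M22 : Matrix (Fin d₂) (Fin d₂) S)
    (M23 : Matrix (Fin d₂) (Fin d₃) S)
    (M31 : Matrix (Fin d₃) (Fin d₁) S) (M32 : Matrix (Fin d₃) (Fin d₂) S)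
    (M33 : Matrix (Fin d₃) (Fin d₃) S)
    (N11 : Matrix (Fin d₁) (Fin d₁) S) (N12 : Matrix (Fin d₁) (Fin d₂) S)
    (N13 : Matrix (Fin d₁) (Fin d₃) S)
    (N21 : Matrix (Fin d₂) (Fin d₁) S) (N22 : Matrix (Fin d₂) (Fin d₂) S)
    (N23 : Matrix (Fin d₂) (Fin d₃) S)
    (N31 : Matrix (Fin d₃) (Fin d₁) S) (N32 : Matrix (Fin d₃) (Fin d₂) S)
    (N33 : Matrix (Fin d₃) (Fin d₃) S) :
    blk3 M11 M12 M13 M21 M22 M23 M31 M32 M33 * blk3 N11 N12 N13 N21 N22 N23 N31 N32 N33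
      = blk3 (M11*N11 + M12*N21 + M13*N31) (M11*N12 + M12*N22 + M13*N32)
          (M11*N13 + M12*N23 + M13*N33)
          (M21*N11 + M22*N21 + M23*N31) (M21*N12 + M22*N22 + M23*N32)
          (M21*N13 + M22*N23 + M23*N33)
          (M31*N11 + M32*N21 + M33*N31) (M31*N12 + M32*N22 + M33*N32)
          (M31*N13 + M32*N23 + M33*N33) := by
  apply Matrix.ext
  rintro (i | i | i) (j | j | j) <;>
    simp [blk3, Matrix.mul_apply, Fintype.sum_sum_type, add_assoc]

set_option linter.unusedSectionVars false in
theorem blk3_congr {d₁ d₂ d₃ : ℕ}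
    {M11 N11 : Matrix (Fin d₁) (Fin d₁) S} {M12 N12 : Matrix (Fin d₁) (Fin d₂) S}
    {M13 N13 : Matrix (Fin d₁) (Fin d₃) S}
    {M21 N21 : Matrix (Fin d₂) (Fin d₁) S} {M22 N22 : Matrix (Fin d₂) (Fin d₂) S}
    {M23 N23 : Matrix (Fin d₂) (Fin d₃) S}
    {M31 N31 : Matrix (Fin d₃) (Fin d₁) S} {M32 N32 : Matrix (Fin d₃) (Fin d₂) S}
    {M33 N33 : Matrix (Fin d₃) (Fin d₃) S}
    (h11 : M11 = N11) (h12 : M12 = N12) (h13 : M13 = N13)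
    (h21 : M21 = N21) (h22 : M22 = N22) (h23 : M23 = N23)
    (h31 : M31 = N31) (h32 : M32 = N32) (h33 : M33 = N33) :
    blk3 M11 M12 M13 M21 M22 M23 M31 M32 M33 = blk3 N11 N12 N13 N21 N22 N23 N31 N32 N33 := by
  subst h11 h12 h13 h21 h22 h23 h31 h32 h33; rfl

set_option linter.unusedSectionVars false in
theorem blk3_add {d₁ d₂ d₃ : ℕ}
    (M11 N11 : Matrix (Fin d₁) (Fin d₁) S) (M12 N12 : Matrix (Fin d₁) (Fin d₂) S)
    (M13 N13 : Matrix (Fin d₁) (Fin d₃) S)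
    (M21 N21 : Matrix (Fin d₂) (Fin d₁) S) (M22 N22 : Matrix (Fin d₂) (Fin d₂) S)
    (M23 N23 : Matrix (Fin d₂) (Fin d₃) S)
    (M31 N31 : Matrix (Fin d₃) (Fin d₁) S) (M32 N32 : Matrix (Fin d₃) (Fin d₂) S)
    (M33 N33 : Matrix (Fin d₃) (Fin d₃) S) :
    blk3 M11 M12 M13 M21 M22 M23 M31 M32 M33 + blk3 N11 N12 N13 N21 N22 N23 N31 N32 N33
      = blk3 (M11+N11) (M12+N12) (M13+N13) (M21+N21) (M22+N22) (M23+N23) (M31+N31) (M32+N32)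
        (M33+N33) := by
  apply Matrix.ext
  rintro (i | i | i) (j | j | j) <;> simp [blk3]

end RotationAux

set_option maxHeartbeats 4000000 in
/-- The full rotation: if the nine equations of the first two rotation steps hold and
`R⁰₃₁` satisfies the final differential equation, then the gauge transform of `A(ε)` by
`R(ε) R′(ε) R″(ε)`, with `R(ε) = [[R⁰₁₁,0,0],[ε⁻¹R⁻¹₂₁,R⁰₂₂,0],[ε⁻²R⁻²₃₁,ε⁻¹R⁻¹₃₂,R⁰₃₃]]`,
`R′(ε) = [[1,0,0],[R⁰₂₁,1,0],[ε⁻¹R⁻¹₃₁,R⁰₃₂,1]]` and `R″(ε) = [[1,0,0],[0,1,0],[R⁰₃₁,0,1]]`,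
is ε-factorised: it equals `ε·B` for a matrix `B` with entries in `S`. -/
theorem rotation_full_eps_factorised
    {S : Type*} [CommRing S] (δ : S → S) (hδ0 : δ 0 = 0)
    (hδadd : ∀ a b, δ (a + b) = δ a + δ b)
    (hδmul : ∀ a b, δ (a * b) = δ a * b + a * δ b)
    {d₁ d₂ d₃ : ℕ}
    (A011 A111 : Matrix (Fin d₁) (Fin d₁) S) (A112 : Matrix (Fin d₁) (Fin d₂) S)
    (Am121 A021 A121 : Matrix (Fin d₂) (Fin d₁) S)
    (A022 A122 : Matrix (Fin d₂) (Fin d₂) S) (A123 : Matrix (Fin d₂) (Fin d₃) S)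
    (Am231 Am131 A031 A131 : Matrix (Fin d₃) (Fin d₁) S)
    (Am132 A032 A132 : Matrix (Fin d₃) (Fin d₂) S)
    (A033 A133 : Matrix (Fin d₃) (Fin d₃) S)
    (R011 : Matrix (Fin d₁) (Fin d₁) S) (hR011 : IsUnit R011.det)
    (R022 : Matrix (Fin d₂) (Fin d₂) S) (hR022 : IsUnit R022.det)
    (R033 : Matrix (Fin d₃) (Fin d₃) S) (hR033 : IsUnit R033.det)
    (Rm121 : Matrix (Fin d₂) (Fin d₁) S) (Rm231 : Matrix (Fin d₃) (Fin d₁) S)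
    (Rm132 : Matrix (Fin d₃) (Fin d₂) S)
    (R021 : Matrix (Fin d₂) (Fin d₁) S) (Rm131 : Matrix (Fin d₃) (Fin d₁) S)
    (R032 : Matrix (Fin d₃) (Fin d₂) S)
    (R031 : Matrix (Fin d₃) (Fin d₁) S)
    (heq1 : R011.map δ = A011 * R011 + A112 * Rm121)
    (heq2 : Rm121.map δ = Am121 * R011 + A022 * Rm121 + A123 * Rm231)
    (heq3 : Rm231.map δ = Am231 * R011 + Am132 * Rm121 + A033 * Rm231)
    (heq4 : R022.map δ = A022 * R022 + A123 * Rm132 - Rm121 * R011⁻¹ * A112 * R022)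
    (heq5 : Rm132.map δ = Am132 * R022 + A033 * Rm132 - Rm231 * R011⁻¹ * A112 * R022)
    (heq6 : R033.map δ = A033 * R033 - Rm132 * R022⁻¹ * A123 * R033)
    (heq7 : Rm131.map δ = R033⁻¹ *
      (Am131 * R011 + A032 * Rm121 + A133 * Rm231
        - Rm132 * R022⁻¹ * (A021 * R011 + A122 * Rm121)
        - (Rm231 - Rm132 * R022⁻¹ * Rm121) * R011⁻¹ * A111 * R011))
    (heq8 : R021.map δ = R022⁻¹ *
      (A021 * R011 + A122 * Rm121 + A123 * R033 * Rm131
        - Rm121 * R011⁻¹ * A111 * R011))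
    (heq9 : R032.map δ = R033⁻¹ *
      (A032 * R022 + A133 * Rm132 - Rm132 * R022⁻¹ * A122 * R022)
        - Rm131 * R011⁻¹ * A112 * R022)
    (heq10 : R031.map δ = R033⁻¹ *
      (A031 * R011 + A132 * Rm121 + A032 * R022 * R021 + A133 * Rm132 * R021
        + A133 * R033 * Rm131
        - Rm132 * R022⁻¹ * (A121 * R011 + A122 * R022 * R021))
        - Rm131 * R011⁻¹ * (A111 * R011 + A112 * R022 * R021)) :
    let Aε := connMat A011 A111 A112 Am121 A021 A121 A022 A122 A123
      Am231 Am131 A031 A131 Am132 A032 A132 A033 A133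
    let Rε := blk3 (lmat 0 R011) 0 0
      (lmat (-1) Rm121) (lmat 0 R022) 0
      (lmat (-2) Rm231) (lmat (-1) Rm132) (lmat 0 R033)
    let R'ε := blk3 1 0 0
      (lmat 0 R021) 1 0
      (lmat (-1) Rm131) (lmat 0 R032) 1
    let R''ε := blk3 1 0 0
      0 1 0
      (lmat 0 R031) 0 1
    ∃ B : Matrix (Fin d₁ ⊕ (Fin d₂ ⊕ Fin d₃)) (Fin d₁ ⊕ (Fin d₂ ⊕ Fin d₃)) S,
      gaugeTransform δ hδ0 Aε (Rε * R'ε * R''ε) = lmat 1 B := by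
  intro Aε Rε R'ε R''ε
  have hm1 : R011⁻¹ * R011 = 1 := Matrix.nonsing_inv_mul _ hR011
  have hm2 : R022⁻¹ * R022 = 1 := Matrix.nonsing_inv_mul _ hR022
  have hm3 : R033⁻¹ * R033 = 1 := Matrix.nonsing_inv_mul _ hR033
  have hc1 : ∀ (q : Type) (X : Matrix (Fin d₁) q S), R011 * (R011⁻¹ * X) = X := by
    intro q X
    rw [← Matrix.mul_assoc, Matrix.mul_nonsing_inv _ hR011, Matrix.one_mul]
  have hc2 : ∀ (q : Type) (X : Matrix (Fin d₂) q S), R022 * (R022⁻¹ * X) = X := by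
    intro q X
    rw [← Matrix.mul_assoc, Matrix.mul_nonsing_inv _ hR022, Matrix.one_mul]
  have hc3 : ∀ (q : Type) (X : Matrix (Fin d₃) q S), R033 * (R033⁻¹ * X) = X := by
    intro q X
    rw [← Matrix.mul_assoc, Matrix.mul_nonsing_inv _ hR033, Matrix.one_mul]
  have hl1 : lmat 0 R011⁻¹ * lmat 0 R011 = (1 : Matrix (Fin d₁) (Fin d₁) (LaurentPolynomial S)) := by
    rw [lmat_mul]; norm_num [hm1, lmat_one]
  have hl2 : lmat 0 R022⁻¹ * lmat 0 R022 = (1 : Matrix (Fin d₂) (Fin d₂) (LaurentPolynomial S)) := by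
    rw [lmat_mul]; norm_num [hm2, lmat_one]
  have hl3 : lmat 0 R033⁻¹ * lmat 0 R033 = (1 : Matrix (Fin d₃) (Fin d₃) (LaurentPolynomial S)) := by
    rw [lmat_mul]; norm_num [hm3, lmat_one]
  have hP : Rε * R'ε * R''ε = (blk3 (lmat 0 R011) 0 0 (lmat (-1) Rm121 + lmat 0 (R022 * R021)) (lmat 0 R022) 0 (lmat (-2) Rm231 + lmat (-1) (Rm132 * R021 + R033 * Rm131) + lmat 0 (R033 * R031)) (lmat (-1) Rm132 + lmat 0 (R033 * R032)) (lmat 0 R033)) := by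
    simp only [Rε, R'ε, R''ε]
    rw [blk3_mul, blk3_mul]
    apply blk3_congr <;>
      (simp only [lmat_mul, lmat_add, lmat_zero, Matrix.zero_mul, Matrix.mul_zero,
        Matrix.one_mul, Matrix.mul_one, add_zero, zero_add, Matrix.add_mul, Matrix.mul_add,
        Int.reduceAdd, Int.reduceNeg] <;> try abel)
  have hQP : (blk3 (lmat 0 R011⁻¹) 0 0 (-(lmat 0 R022⁻¹ * (lmat (-1) Rm121 + lmat 0 (R022 * R021)) * lmat 0 R011⁻¹)) (lmat 0 R022⁻¹) 0 (lmat 0 R033⁻¹ * ((lmat (-1) Rm132 + lmat 0 (R033 * R032)) * (lmat 0 R022⁻¹ * (lmat (-1) Rm121 + lmat 0 (R022 * R021))) - (lmat (-2) Rm231 + lmat (-1) (Rm132 * R021 + R033 * Rm131) + lmat 0 (R033 * R031))) * lmat 0 R011⁻¹) (-(lmat 0 R033⁻¹ * (lmat (-1) Rm132 + lmat 0 (R033 * R032)) * lmat 0 R022⁻¹)) (lmat 0 R033⁻¹)) * (blk3 (lmat 0 R011) 0 0 (lmat (-1) Rm121 + lmat 0 (R022 * R021)) (lmat 0 R022) 0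 (lmat (-2) Rm231 + lmat (-1) (Rm132 * R021 + R033 * Rm131) + lmat 0 (R033 * R031)) (lmat (-1) Rm132 + lmat 0 (R033 * R032)) (lmat 0 R033)) = 1 := by
    rw [blk3_mul, blk3_one]
    apply blk3_congr <;>
      (simp only [Matrix.mul_assoc, hl1, hl2, hl3, Matrix.mul_one, Matrix.one_mul,
        add_zero, zero_add, Matrix.zero_mul,
        Matrix.mul_zero, Matrix.mul_sub, Matrix.sub_mul,
        Matrix.neg_mul, Matrix.mul_neg] <;> try abel)
  have hdet : IsUnit ((blk3 (lmat 0 R011) 0 0 (lmat (-1) Rm121 + lmat 0 (R022 * R021)) (lmat 0 R022) 0 (lmat (-2) Rm231 + lmat (-1) (Rm132 * R021 + R033 * Rm131) + lmat 0 (R033 * R031)) (lmat (-1) Rm132 + lmat 0 (R033 * R032)) (lmat 0 R033))).det := Matrix.isUnit_det_of_left_inverse hQP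
  have hPinv : ((blk3 (lmat 0 R011) 0 0 (lmat (-1) Rm121 + lmat 0 (R022 * R021)) (lmat 0 R022) 0 (lmat (-2) Rm231 + lmat (-1) (Rm132 * R021 + R033 * Rm131) + lmat 0 (R033 * R031)) (lmat (-1) Rm132 + lmat 0 (R033 * R032)) (lmat 0 R033)))⁻¹ * (blk3 (lmat 0 R011) 0 0 (lmat (-1) Rm121 + lmat 0 (R022 * R021)) (lmat 0 R022) 0 (lmat (-2) Rm231 + lmat (-1) (Rm132 * R021 + R033 * Rm131) + lmat 0 (R033 * R031)) (lmat (-1) Rm132 + lmat 0 (R033 * R032)) (lmat 0 R033)) = 1 := Matrix.nonsing_inv_mul _ hdet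
  have key : (connMat A011 A111 A112 Am121 A021 A121 A022 A122 A123 Am231 Am131 A031 A131 Am132 A032 A132 A033 A133) * (blk3 (lmat 0 R011) 0 0 (lmat (-1) Rm121 + lmat 0 (R022 * R021)) (lmat 0 R022) 0 (lmat (-2) Rm231 + lmat (-1) (Rm132 * R021 + R033 * Rm131) + lmat 0 (R033 * R031)) (lmat (-1) Rm132 + lmat 0 (R033 * R032)) (lmat 0 R033))
      = ((blk3 (lmat 0 R011) 0 0 (lmat (-1) Rm121 + lmat 0 (R022 * R021)) (lmat 0 R022) 0 (lmat (-2) Rm231 + lmat (-1) (Rm132 * R021 + R033 * Rm131) + lmat 0 (R033 * R031)) (lmat (-1) Rm132 + lmat 0 (R033 * R032)) (lmat 0 R033))).map (lder δ hδ0) + (blk3 (lmat 0 R011) 0 0 (lmat (-1) Rm121 + lmat 0 (R022 * R021)) (lmat 0 R022) 0 (lmat (-2) Rm231 + lmat (-1) (Rm132 * R021 + R033 * Rm131) + lmat 0 (R033 * R031)) (lmat (-1) Rm132 + lmat 0 (R033 * R032)) (lmat 0 R033)) * lmat 1 (blk3 (R011⁻¹ * (A111 * R011 + A112 * (R022 *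 R021))) (R011⁻¹ * (A112 * R022)) 0 (R022⁻¹ * (A121 * R011 + A122 * (R022 * R021) + A123 * (R033 * R031)) - R021 * (R011⁻¹ * (A111 * R011 + A112 * (R022 * R021)))) (R022⁻¹ * (A122 * R022 + A123 * (R033 * R032)) - R021 * (R011⁻¹ * (A112 * R022))) (R022⁻¹ * (A123 * R033)) (R033⁻¹ * (A131 * R011 + A132 * (R022 * R021) + A133 * (R033 * R031)) - R031 * (R011⁻¹ * (A111 * R011 + A112 * (R022 * R021))) - R032 * (R022⁻¹ * (A121 * R011 + A122 * (R022 * R021) + A123 * (R033 * R031)) - R021 * (R011⁻¹ * (A111 * R011 + A112 * (R022 * R021))))) (R033⁻¹ * (A132 * R022 + A133 * (R033 * R032)) - R031 * (R011⁻¹ * (A112 * R022)) - R032 * (R022⁻¹ * (A122 * R022 + A123 * (R033 * R032)) - R021 * (R011⁻¹ * (A112 * R022)))) (R033⁻¹ * (A133 * R033) - R032 * (R022⁻¹ * (A123 * R033)))) := by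
    rw [connMat, blk3_mul, blk3_map, lmat_blk3, blk3_mul, blk3_add]
    apply blk3_congr <;>
      (simp only [heq1, heq2, heq3, heq4, heq5, heq6, heq7, heq8, heq9, heq10,
        mapd_mul hδadd hδmul, mapd_add hδadd, mapl_add hδadd, mapl_zero, lmat_lder,
        lmat_mul, lmat_add, lmat_sub, lmat_zero, Matrix.zero_mul, Matrix.mul_zero,
        add_zero, zero_add, Matrix.mul_add, Matrix.add_mul, Matrix.mul_sub, Matrix.sub_mul,
        Matrix.mul_assoc, hc1, hc2, hc3,
        Int.reduceAdd, Int.reduceNeg] <;> try abel)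
  refine ⟨(blk3 (R011⁻¹ * (A111 * R011 + A112 * (R022 * R021))) (R011⁻¹ * (A112 * R022)) 0 (R022⁻¹ * (A121 * R011 + A122 * (R022 * R021) + A123 * (R033 * R031)) - R021 * (R011⁻¹ * (A111 * R011 + A112 * (R022 * R021)))) (R022⁻¹ * (A122 * R022 + A123 * (R033 * R032)) - R021 * (R011⁻¹ * (A112 * R022))) (R022⁻¹ * (A123 * R033)) (R033⁻¹ * (A131 * R011 + A132 * (R022 * R021) + A133 * (R033 * R031)) - R031 * (R011⁻¹ * (A111 * R011 + A112 * (R022 * R021))) - R032 * (R022⁻¹ * (A121 * R011 + A122 * (R022 * R021) + A123 * (R033 * R031)) - R021 * (R011⁻¹ * (A111 * R011 + A112 * (R022 * R021))))) (R033⁻¹ * (A132 * R022 + A133 * (R033 * R032)) - R031 * (R011⁻¹ * (A112 * R022)) - R032 * (R022⁻¹ * (A122 * R022 + A123 * (R033 * R032)) - R021 * (R011⁻¹ * (A112 * R022)))) (R033⁻¹ * (A133 * R033) - R032 * (R022⁻¹ * (A123 * R033)))), ?_⟩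
  simp only [Aε, Rε, R'ε, R''ε, gaugeTransform]
  rw [hP, Matrix.mul_assoc, key, Matrix.mul_add, ← Matrix.mul_assoc _ (blk3 (lmat 0 R011) 0 0 (lmat (-1) Rm121 + lmat 0 (R022 * R021)) (lmat 0 R022) 0 (lmat (-2) Rm231 + lmat (-1) (Rm132 * R021 + R033 * Rm131) + lmat 0 (R033 * R031)) (lmat (-1) Rm132 + lmat 0 (R033 * R032)) (lmat 0 R033)), hPinv,
    Matrix.one_mul]
  abel
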